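/- Let F be a facet of a simplicial forest Γ. Then the reduced connected component conn̄_Γ(F) of F in Γ is a simplicial forest. -/

import Mathlib

open Finset

/-- A (finite) simplicial complex, recorded via its facets: a finite antichain of
nonempty finite subsets of the vertex type `V`.  The faces of the complex are
exactly the subsets of the facets, so the complex is determined by this data. -/
structure FacetComplex (V : Type) [DecidableEq V] : Type where
  facets : Finset (Finset V)
  nonempty_of_mem : ∀ F ∈ facets, F ≠ ∅
  antichain : ∀ F ∈ facets, ∀ G ∈ facets, F ⊆ G → F = G

namespace FacetComplex

variable {V : Type} [DecidableEq V]

/-- The vertex set of a complex: the union of its facets. -/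
def vertexSet (Γ : FacetComplex V) : Finset V := Γ.facets.sup id

/-- A facet `F` is a leaf if it is the only facet, or there is another facet `G`
with `F ∩ F' ⊆ G` for every facet `F' ≠ F`. -/
def IsLeaf (Γ : FacetComplex V) (F : Finset V) : Prop :=
  F ∈ Γ.facets ∧ (Γ.facets = {F} ∨
    ∃ G ∈ Γ.facets, G ≠ F ∧ ∀ F' ∈ Γ.facets, F' ≠ F → F ∩ F' ⊆ G)

/-- Two facets are connected if they are joined by a chain of facets in which
consecutive facets intersect nontrivially. -/
def FacetConnected (Γ : FacetComplex V) (F G : Finset V) : Prop :=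
  Relation.ReflTransGen
    (fun A B => A ∈ Γ.facets ∧ B ∈ Γ.facets ∧ (A ∩ B).Nonempty) F G

/-- A complex is connected if any two of its facets are connected. -/
def Connected (Γ : FacetComplex V) : Prop :=
  ∀ F ∈ Γ.facets, ∀ G ∈ Γ.facets, Γ.FacetConnected F G

/-- The subcollection generated by a subset of the facets. -/
def subcollection (Γ : FacetComplex V) (s : Finset (Finset V))
    (hs : s ⊆ Γ.facets) : FacetComplex V where
  facets := s
  nonempty_of_mem := fun F hF => Γ.nonempty_of_mem F (hs hF)
  antichain := fun F hF G hG => Γ.antichain F (hs hF) G (hs hG)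

/-- A connected complex is a tree if every nonempty subcollection has a leaf. -/
def IsTree (Γ : FacetComplex V) : Prop :=
  Γ.Connected ∧ ∀ (s : Finset (Finset V)) (hs : s ⊆ Γ.facets), s.Nonempty →
    ∃ F, (Γ.subcollection s hs).IsLeaf F

open scoped Classical in
/-- The connected component of a facet `F` in `Γ`. -/
noncomputable def component (Γ : FacetComplex V) (F : Finset V) : FacetComplex V :=
  Γ.subcollection (Γ.facets.filter (fun G => Γ.FacetConnected F G))
    (Finset.filter_subset _ _)

/-- A complex is a forest if every connected component of it is a tree. -/
def IsForest (Γ : FacetComplex V) : Prop :=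
  ∀ F ∈ Γ.facets, (Γ.component F).IsTree

open scoped Classical in
/-- The reduced connected component `conn̄_Γ(F)` of a facet `F` of `Γ`: if the
connected component of `F` with `F` removed has facets `F_1, …, F_p`, its
facets are the minimal nonempty sets among `F_1 \ F, …, F_p \ F`. -/
noncomputable def reducedConn (Γ : FacetComplex V) (F : Finset V) : FacetComplex V where
  facets :=
    ((Γ.component F).facets.erase F).image (fun G => G \ F) |>.filter
      (fun A => A ≠ ∅ ∧
        ∀ B ∈ ((Γ.component F).facets.erase F).image (fun G => G \ F),
          B ≠ ∅ → B ⊆ A → B = A)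
  nonempty_of_mem := fun A hA => (Finset.mem_filter.mp hA).2.1
  antichain := fun A hA B hB hAB => by
    have hA' := Finset.mem_filter.mp hA
    have hB' := Finset.mem_filter.mp hB
    exact (hB'.2.2 A hA'.1 hA'.2.1 hAB)

open scoped Classical in
/-- The induced subcollection `Γ_A` on a set of vertices `A`: it is generated by
the facets of `Γ` contained in `A`. -/
def induced (Γ : FacetComplex V) (A : Finset V) : FacetComplex V :=
  Γ.subcollection (Γ.facets.filter (fun F => F ⊆ A)) (Finset.filter_subset _ _)

/-- The subcomplex `⟨s ∩ facets⟩` generated by those members of `s` that are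
facets of `Γ`; for `s ⊆ Γ.facets` this is the subcollection generated by `s`. -/
def restrict (Γ : FacetComplex V) (s : Finset (Finset V)) : FacetComplex V :=
  Γ.subcollection (s ∩ Γ.facets) Finset.inter_subset_right

/-- The facet ideal of `Γ`: the squarefree monomial ideal of `k[x_v : v ∈ V]`
generated by the products `∏_{x ∈ F} x` over the facets `F` of `Γ`. -/
noncomputable def facetIdeal (k : Type) [Field k] (Γ : FacetComplex V) :
    Ideal (MvPolynomial V k) :=
  Ideal.span ((fun F : Finset V => ∏ x ∈ F, MvPolynomial.X x) '' Γ.facets)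

end FacetComplex

/-- The squarefree multidegree (exponent vector) attached to a finite set `A` of
variables, i.e. the multidegree of the squarefree monomial `∏_{v ∈ A} x_v`. -/
noncomputable def sqfDeg {V : Type} [DecidableEq V] (A : Finset V) : V →₀ ℕ :=
  ∑ v ∈ A, Finsupp.single v 1

/-!
Every nonempty subcollection of a forest has a leaf (take a leaf of the part lying in one
connected component; the other facets are disjoint from it), and conversely. This leaf property
passes to the traces `G \ F` of the facets `G` on the complement of `F`: a leaf `L` of a lift of a
subcollection traces to a leaf `L \ F`, since `(L \ F) ∩ (G' \ F) ⊆ (L ∩ G') \ F`. The facets of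
`conn̄_Γ(F)` are such traces.
-/

namespace FacetComplex

variable {V : Type} [DecidableEq V]

def SubcollectionsHaveLeaves (Γ : FacetComplex V) : Prop :=
  ∀ (s : Finset (Finset V)) (hs : s ⊆ Γ.facets), s.Nonempty →
    ∃ L, (Γ.subcollection s hs).IsLeaf L

theorem FacetConnected.symm {Γ : FacetComplex V} {A B : Finset V}
    (h : Γ.FacetConnected A B) : Γ.FacetConnected B A := by
  induction h with
  | refl => exact .refl
  | @tail B C _ hstep ih =>
      exact .head ⟨hstep.2.1, hstep.1, inter_comm B C ▸ hstep.2.2⟩ ih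

theorem mem_component_facets {Γ : FacetComplex V} {F G : Finset V} :
    G ∈ (Γ.component F).facets ↔ G ∈ Γ.facets ∧ Γ.FacetConnected F G := by
  classical
  simp [component, subcollection]

theorem FacetConnected.component {Γ : FacetComplex V} {F A : Finset V}
    (h : Γ.FacetConnected F A) : (Γ.component F).FacetConnected F A := by
  induction h with
  | refl => exact .refl
  | tail hFB hstep ih =>
      exact ih.tail ⟨mem_component_facets.2 ⟨hstep.1, hFB⟩,
        mem_component_facets.2 ⟨hstep.2.1, hFB.tail hstep⟩, hstep.2.2⟩

theorem component_connected (Γ : FacetComplex V) (F : Finset V) :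
    (Γ.component F).Connected := fun _ hA _ hB =>
  (mem_component_facets.1 hA).2.component.symm.trans (mem_component_facets.1 hB).2.component

theorem IsLeaf.of_subcollection {Γ : FacetComplex V} {s : Finset (Finset V)}
    (hs : s ⊆ Γ.facets) {L : Finset V} (hL : (Γ.subcollection s hs).IsLeaf L)
    (hdisj : ∀ G ∈ Γ.facets, G ∉ s → Disjoint L G) : Γ.IsLeaf L := by
  obtain ⟨hLs, hL⟩ := hL
  refine ⟨hs hLs, ?_⟩
  by_cases hsingle : Γ.facets = {L}
  · exact .inl hsingle
  right
  have inter_subset_of_not_mem {G' : Finset V} (hG' : G' ∈ Γ.facets) (h : G' ∉ s)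
      (G : Finset V) : L ∩ G' ⊆ G := by
    rw [disjoint_iff_inter_eq_empty.1 (hdisj G' hG' h)]
    exact empty_subset G
  rcases hL with hsL | ⟨G, hG, hGL, hLG⟩
  · obtain ⟨M, hM, hML⟩ : ∃ M ∈ Γ.facets, M ≠ L := by
      by_contra! h
      exact hsingle (eq_singleton_iff_unique_mem.2 ⟨hs hLs, h⟩)
    refine ⟨M, hM, hML, fun G' hG' hG'L => inter_subset_of_not_mem hG' ?_ M⟩
    exact fun h => hG'L (mem_singleton.1 (hsL ▸ h : G' ∈ ({L} : Finset (Finset V))))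
  · refine ⟨G, hs hG, hGL, fun G' hG' hG'L => ?_⟩
    by_cases h : G' ∈ s
    · exact hLG G' h hG'L
    · exact inter_subset_of_not_mem hG' h G

theorem IsForest.subcollectionsHaveLeaves {Γ : FacetComplex V} (hΓ : Γ.IsForest) :
    Γ.SubcollectionsHaveLeaves := by
  classical
  rintro s hs ⟨F₀, hF₀⟩
  set s₀ := s.filter (Γ.FacetConnected F₀ ·)
  have hs₀ : s₀ ⊆ (Γ.component F₀).facets := fun G hG =>
    mem_component_facets.2 ⟨hs (mem_filter.1 hG).1, (mem_filter.1 hG).2⟩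
  obtain ⟨L, hL⟩ := (hΓ F₀ (hs hF₀)).2 s₀ hs₀ ⟨F₀, mem_filter.2 ⟨hF₀, .refl⟩⟩
  refine ⟨L, IsLeaf.of_subcollection (Γ := Γ.subcollection s hs) (filter_subset _ s) hL ?_⟩
  intro G hG hGs₀
  by_contra hLG
  obtain ⟨hLs, hF₀L⟩ := mem_filter.1 hL.1
  exact hGs₀ (mem_filter.2 ⟨hG, hF₀L.tail ⟨hs hLs, hs hG, not_disjoint_iff_nonempty_inter.1 hLG⟩⟩)

theorem isForest_iff {Γ : FacetComplex V} : Γ.IsForest ↔ Γ.SubcollectionsHaveLeaves := by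
  classical
  refine ⟨IsForest.subcollectionsHaveLeaves, fun h F _ => ⟨component_connected Γ F, ?_⟩⟩
  exact fun s hs => h s (hs.trans (filter_subset _ _))

theorem IsLeaf.image_sdiff {Γ Δ : FacetComplex V} {F : Finset V}
    (hΔ : Δ.facets = Γ.facets.image (· \ F)) (hinj : Set.InjOn (· \ F) ↑Γ.facets)
    {L : Finset V} (hL : Γ.IsLeaf L) : Δ.IsLeaf (L \ F) := by
  obtain ⟨hLΓ, hL⟩ := hL
  refine ⟨hΔ ▸ mem_image_of_mem _ hLΓ, ?_⟩
  rcases hL with hsingle | ⟨G, hG, hGL, hLG⟩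
  · exact .inl (by rw [hΔ, hsingle, image_singleton])
  · refine .inr ⟨G \ F, hΔ ▸ mem_image_of_mem _ hG, fun h => hGL (hinj hG hLΓ h), ?_⟩
    rw [hΔ, forall_mem_image]
    intro G' hG' hG'L x hx
    rw [mem_inter, mem_sdiff, mem_sdiff] at hx
    have hxG := hLG G' hG' (fun h => hG'L (h ▸ rfl)) (mem_inter.2 ⟨hx.1.1, hx.2.1⟩)
    exact mem_sdiff.2 ⟨hxG, hx.1.2⟩

theorem SubcollectionsHaveLeaves.of_subset_image_sdiff {Γ Δ : FacetComplex V}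
    (hΓ : Γ.SubcollectionsHaveLeaves) {F : Finset V}
    (hΔ : Δ.facets ⊆ Γ.facets.image (· \ F)) : Δ.SubcollectionsHaveLeaves := by
  intro s hs hne
  choose! φ hφΓ hφ using fun A (hA : A ∈ s) => mem_image.1 (hΔ (hs hA))
  have hT : s.image φ ⊆ Γ.facets := image_subset_iff.2 hφΓ
  have hTs : s = (s.image φ).image (· \ F) := by
    rw [image_image, Function.comp_def, image_congr (g := id) hφ, image_id]
  have hinj : Set.InjOn (· \ F) ↑(s.image φ) := by
    rintro _ hA' _ hB' h
    obtain ⟨A, hA, rfl⟩ := mem_image.1 hA'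
    obtain ⟨B, hB, rfl⟩ := mem_image.1 hB'
    simp only [hφ A hA, hφ B hB] at h
    rw [h]
  obtain ⟨L, hL⟩ := hΓ (s.image φ) hT (hne.image φ)
  exact ⟨L \ F, IsLeaf.image_sdiff (Γ := Γ.subcollection _ hT) hTs hinj hL⟩

theorem reducedConn_facets_subset_image (Γ : FacetComplex V) (F : Finset V) :
    (Γ.reducedConn F).facets ⊆ Γ.facets.image (· \ F) := by
  intro A hA
  obtain ⟨G, hG, rfl⟩ := mem_image.1 (mem_filter.1 hA).1
  exact mem_image_of_mem _ (mem_component_facets.1 (mem_of_mem_erase hG)).1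

end FacetComplex

theorem reducedConn_isForest_general
    {V : Type} [DecidableEq V]
    (Γ : FacetComplex V) (hΓ : Γ.IsForest)
    (F : Finset V) :
    (Γ.reducedConn F).IsForest :=
  FacetComplex.isForest_iff.2 <| (FacetComplex.isForest_iff.1 hΓ).of_subset_image_sdiff
    (Γ.reducedConn_facets_subset_image F)

/-- If `F` is a facet of a simplicial forest `Γ`, then the
reduced connected component `conn̄_Γ(F)` of `F` in `Γ` is a simplicial forest. -/
theorem reducedConn_isForest
    {V : Type} [Fintype V] [DecidableEq V]
    (Γ : FacetComplex V) (hΓ : Γ.IsForest)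
    (F : Finset V) (hF : F ∈ Γ.facets) :
    (Γ.reducedConn F).IsForest :=
  reducedConn_isForest_general Γ hΓ F
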